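/- arXiv:2403.12460 — 2 statements merged into one kernel-verified Lean document; each statement's English description precedes it below -/
import Mathlib

section
/- In the dual formulation of SVRG with exact data, if x† - x₀ = A* λ† for some λ† ∈ Y, then the dual variables λ_n (with x_n = x₀ + A* λ_n) satisfy E[‖λ_{n+1} - λ†‖²] - E[‖λ_n - λ†‖²] ≤ -2γ₀ E[‖x_n - x†‖²] - (2γ₁/N) Σ_{k=0}^{m-1} E[‖x_{n,k} - x†‖²] + (2γ₁²/N) Σ_{k=0}^{m-1} E[‖A x_{n,k} - y‖²] + (γ₀² + 2mγ₁²/N) E[‖A x_n - y‖²]. -/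
open MeasureTheory ProbabilityTheory Filter

noncomputable section

/-- The `ℓ²`-product of finitely many complete spaces is complete. -/
instance piLpCompleteSpace {N : ℕ} {Y : Fin N → Type*} [∀ i, NormedAddCommGroup (Y i)]
    [∀ i, CompleteSpace (Y i)] : CompleteSpace (PiLp 2 Y) :=
  inferInstance

/-- The stacked operator `A x = (A₁ x, …, A_N x)` into the `ℓ²`-product space. -/
def stackOp {N : ℕ} {X : Type*} [NormedAddCommGroup X] [InnerProductSpace ℝ X]
    {Y : Fin N → Type*} [∀ i, NormedAddCommGroup (Y i)] [∀ i, InnerProductSpace ℝ (Y i)]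
    (A : ∀ i, X →L[ℝ] Y i) : X →L[ℝ] PiLp 2 Y :=
  (PiLp.continuousLinearEquiv 2 ℝ Y).symm.toContinuousLinearMap.comp (ContinuousLinearMap.pi A)

open scoped RealInnerProductSpace

/-!
Expanding the square, a dual step `λ ↦ λ - γ μ` changes `‖λ - λ†‖²` by
`-2γ ⟪λ - λ†, μ⟫ + γ² ‖μ‖²`, and the source condition turns `⟪λ - λ†, A x - y⟫` into `‖x - x†‖²`
for `x = x₀ + A* λ`. This settles the full-gradient step exactly. In an inner step, the iterates
`λ_{n,k}` and `x_n` are deterministic functions of the finitely many indices sampled before,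
while `i_{n,k}` is uniform and independent of them; averaging over it gives
`E μ_{n,k} = (A x_{n,k} - y)/N` and `E ‖μ_{n,k}‖² ≤ (2/N) (‖A x_{n,k} - y‖² + ‖A x_n - y‖²)`.
Since everything takes finitely many values, integrability is automatic. Summing the full step
and the `m` inner steps gives the bound.
-/

def IsFunctionOf {Ω ι α β : Type*} (I : ι → Ω → α) (s : Finset ι) (f : Ω → β) : Prop :=
  ∃ g : (s → α) → β, ∀ ω, f ω = g fun i => I i ω

namespace IsFunctionOf

variable {Ω ι α β γ : Type*} {I : ι → Ω → α} {s t : Finset ι} {f : Ω → β}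

lemma const (s : Finset ι) (c : β) : IsFunctionOf I s fun _ => c :=
  ⟨fun _ => c, fun _ => rfl⟩

lemma apply {i : ι} (hi : i ∈ s) : IsFunctionOf I s (I i) :=
  ⟨fun v => v ⟨i, hi⟩, fun _ => rfl⟩

lemma mono (hf : IsFunctionOf I s f) (hst : s ⊆ t) : IsFunctionOf I t f := by
  obtain ⟨g, hg⟩ := hf
  exact ⟨fun v => g fun i => v ⟨i, hst i.2⟩, hg⟩

lemma comp (hf : IsFunctionOf I s f) (φ : β → γ) : IsFunctionOf I s fun ω => φ (f ω) := by
  obtain ⟨g, hg⟩ := hf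
  exact ⟨φ ∘ g, fun ω => congrArg φ (hg ω)⟩

lemma prodMk {g : Ω → γ} (hf : IsFunctionOf I s f) (hg : IsFunctionOf I s g) :
    IsFunctionOf I s fun ω => (f ω, g ω) := by
  obtain ⟨F, hF⟩ := hf
  obtain ⟨G, hG⟩ := hg
  exact ⟨fun v => (F v, G v), fun ω => Prod.ext (hF ω) (hG ω)⟩

lemma congr {g : Ω → β} (hf : IsFunctionOf I s f) (h : ∀ ω, g ω = f ω) :
    IsFunctionOf I s g := by
  obtain ⟨F, hF⟩ := hf
  exact ⟨F, fun ω => by rw [h, hF]⟩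

lemma integrable [MeasurableSpace Ω] {P : Measure Ω} [IsFiniteMeasure P] [MeasurableSpace α]
    [MeasurableSingletonClass α] [Finite α] {E : Type*} [NormedAddCommGroup E] {f : Ω → E}
    (hI : ∀ i, Measurable (I i)) (hf : IsFunctionOf I s f) : Integrable f P := by
  obtain ⟨g, hg⟩ := hf
  rw [funext hg]
  exact Integrable.of_finite.comp_measurable (measurable_pi_lambda _ fun i => hI i)

end IsFunctionOf

lemma integral_comp_uniform_of_indepFun {Ω α : Type*} [MeasurableSpace Ω] {P : Measure Ω}
    [IsProbabilityMeasure P] {N : ℕ} [MeasurableSpace α] [MeasurableSingletonClass α] [Finite α]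
    {U : Ω → Fin N} {Z : Ω → α} (hU : Measurable U) (hZ : Measurable Z) (hUZ : IndepFun U Z P)
    (hunif : ∀ j, P {ω | U ω = j} = 1 / N) (F : Fin N → α → ℝ) :
    ∫ ω, F (U ω) (Z ω) ∂P = (N : ℝ)⁻¹ * ∑ j, ∫ ω, F j (Z ω) ∂P := by
  have hsplit : ∀ ω, F (U ω) (Z ω) = ∑ j, (if U ω = j then (1 : ℝ) else 0) * F j (Z ω) := by
    intro ω
    simp
  have hprob : ∀ j, ∫ ω, (if U ω = j then (1 : ℝ) else 0) ∂P = (N : ℝ)⁻¹ := by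
    intro j
    have hind : (fun ω => if U ω = j then (1 : ℝ) else 0) = {ω | U ω = j}.indicator 1 := by
      ext ω
      simp [Set.indicator_apply]
    rw [hind, integral_indicator_one (s := {ω | U ω = j}) (hU (measurableSet_singleton j)),
      measureReal_def, hunif]
    simp
  have hterm : ∀ j, ∫ ω, (if U ω = j then (1 : ℝ) else 0) * F j (Z ω) ∂P
      = (N : ℝ)⁻¹ * ∫ ω, F j (Z ω) ∂P := by
    intro j
    rw [hUZ.integral_fun_comp_mul_comp (f := fun i => if i = j then (1 : ℝ) else 0)
      hU.aemeasurable hZ.aemeasurable (measurable_of_finite _).aestronglyMeasurable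
      (measurable_of_finite _).aestronglyMeasurable, hprob]
  simp_rw [hsplit]
  rw [integral_finsetSum _ fun j _ => ?_, Finset.mul_sum]
  · simp_rw [hterm]
  · exact (Integrable.of_finite (f := fun p : Fin N × α =>
      (if p.1 = j then (1 : ℝ) else 0) * F j p.2)).comp_measurable (hU.prodMk hZ)

lemma ProbabilityTheory.iIndepFun.indepFun_tuple_of_notMem {Ω ι α : Type*} [MeasurableSpace Ω]
    {P : Measure Ω} [MeasurableSpace α] {I : ι → Ω → α} (hindep : iIndepFun I P)
    (hI : ∀ i, Measurable (I i)) {s : Finset ι} {i : ι} (hi : i ∉ s) :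
    IndepFun (I i) (fun ω (k : s) => I k ω) P :=
  (hindep.indepFun_finset {i} s (Finset.disjoint_singleton_left.mpr hi) hI).comp
    (measurable_pi_apply (⟨i, Finset.mem_singleton_self i⟩ : ({i} : Finset ι))) measurable_id

lemma IsFunctionOf.integral_comp_uniform {Ω ι β : Type*} [MeasurableSpace Ω] {P : Measure Ω}
    [IsProbabilityMeasure P] {N : ℕ} {I : ι → Ω → Fin N} (hI : ∀ i, Measurable (I i))
    (hindep : iIndepFun I P) {s : Finset ι} {i : ι} (hi : i ∉ s)
    (hunif : ∀ j, P {ω | I i ω = j} = 1 / N) {f : Ω → β} (hf : IsFunctionOf I s f)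
    (F : Fin N → β → ℝ) :
    ∫ ω, F (I i ω) (f ω) ∂P = (N : ℝ)⁻¹ * ∫ ω, ∑ j, F j (f ω) ∂P := by
  obtain ⟨g, hg⟩ := hf
  have hZ : Measurable fun ω (k : s) => I k ω := measurable_pi_lambda _ fun k => hI k
  simp_rw [hg]
  rw [integral_comp_uniform_of_indepFun (hI i) hZ (hindep.indepFun_tuple_of_notMem hI hi) hunif
    (fun j v => F j (g v)), integral_finsetSum _ fun j _ => ?_]
  exact (Integrable.of_finite (f := fun v => F j (g v))).comp_measurable hZ

lemma norm_sub_smul_sub_sq {E : Type*} [NormedAddCommGroup E] [InnerProductSpace ℝ E]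
    (v d w : E) (γ : ℝ) :
    ‖v - γ • d - w‖ ^ 2 = ‖v - w‖ ^ 2 - 2 * γ * ⟪v - w, d⟫ + γ ^ 2 * ‖d‖ ^ 2 := by
  rw [sub_right_comm, norm_sub_sq_real, real_inner_smul_right, norm_smul, mul_pow,
    Real.norm_eq_abs, sq_abs]
  ring

lemma sum_norm_sq_ite_add_smul_le {E ι : Type*} [NormedAddCommGroup E] [InnerProductSpace ℝ E]
    [Fintype ι] [DecidableEq ι] [Nonempty ι] (l : ι) (a e : E) :
    ∑ j, ‖(if l = j then a - e else 0) + (Fintype.card ι : ℝ)⁻¹ • e‖ ^ 2 ≤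
      2 * ‖a‖ ^ 2 + 2 * ‖e‖ ^ 2 := by
  set t : ℝ := (Fintype.card ι : ℝ)⁻¹
  have hcard : (Fintype.card ι : ℝ) * t = 1 := mul_inv_cancel₀ (by positivity)
  have ht0 : 0 ≤ t := by positivity
  have ht1 : t ≤ 1 := inv_le_one_of_one_le₀ (by exact_mod_cast Fintype.card_pos)
  have hsum : ∑ j, ‖(if l = j then a - e else 0) + t • e‖ ^ 2 =
      ‖a - e‖ ^ 2 + 2 * t * ⟪a - e, e⟫ + t * ‖e‖ ^ 2 := by
    have hterm : ∀ j, ‖(if l = j then a - e else 0) + t • e‖ ^ 2 =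
        (if l = j then ‖a - e‖ ^ 2 + 2 * t * ⟪a - e, e⟫ else 0) + t ^ 2 * ‖e‖ ^ 2 := by
      intro j
      split_ifs
      · rw [norm_add_sq_real, real_inner_smul_right, norm_smul, mul_pow, Real.norm_eq_abs,
          sq_abs]
        ring
      · rw [zero_add, norm_smul, mul_pow, Real.norm_eq_abs, sq_abs, zero_add]
    simp only [hterm, Finset.sum_add_distrib, Finset.sum_ite_eq, Finset.mem_univ, if_true,
      Finset.sum_const, Finset.card_univ, nsmul_eq_mul]
    linear_combination (t * ‖e‖ ^ 2) * hcard
  rw [hsum]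
  have hae : -(‖a‖ ^ 2 + ‖e‖ ^ 2) ≤ 2 * ⟪a, e⟫ := by
    nlinarith [norm_add_sq_real a e, sq_nonneg ‖a + e‖]
  rw [inner_sub_left, real_inner_self_eq_norm_sq, norm_sub_sq_real]
  nlinarith [mul_nonneg (sub_nonneg.2 ht1) (sq_nonneg ‖a‖), mul_nonneg ht0 (sq_nonneg ‖e‖)]

lemma inner_sub_apply_sub_eq_norm_sq {E F : Type*} [NormedAddCommGroup E] [InnerProductSpace ℝ E]
    [CompleteSpace E] [NormedAddCommGroup F] [InnerProductSpace ℝ F] [CompleteSpace F]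
    (T : E →L[ℝ] F) {x₀ xdag u : E} {y lamdag lam : F} (hsol : T xdag = y)
    (hsource : xdag - x₀ = (ContinuousLinearMap.adjoint T) lamdag)
    (hu : u = x₀ + (ContinuousLinearMap.adjoint T) lam) :
    ⟪lam - lamdag, T u - y⟫ = ‖u - xdag‖ ^ 2 := by
  have hdual : u - xdag = (ContinuousLinearMap.adjoint T) (lam - lamdag) := by
    rw [map_sub, ← hsource, hu]
    abel
  rw [← hsol, ← map_sub, ← ContinuousLinearMap.adjoint_inner_left, ← hdual,
    real_inner_self_eq_norm_sq]

section StackedOperator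

variable {N : ℕ} {X : Type*} [NormedAddCommGroup X] [InnerProductSpace ℝ X]
  {Y : Fin N → Type*} [∀ i, NormedAddCommGroup (Y i)] [∀ i, InnerProductSpace ℝ (Y i)]

lemma stackOp_apply (A : ∀ i, X →L[ℝ] Y i) (u : X) (l : Fin N) : stackOp A u l = A l u := rfl

lemma norm_sq_stackOp_sub (A : ∀ i, X →L[ℝ] Y i) (u : X) (y : PiLp 2 Y) :
    ‖stackOp A u - y‖ ^ 2 = ∑ l, ‖A l u - y l‖ ^ 2 :=
  PiLp.norm_sq_eq_of_L2 _ _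

/-- The paper's `μ_{n,k}` with sampled index `j = i_{n,k}`, inner iterate `u = x_{n,k}` and
anchor `v = x_n`. -/
def svrgDirection (A : ∀ i, X →L[ℝ] Y i) (y : PiLp 2 Y) (j : Fin N) (u v : X) : PiLp 2 Y :=
  WithLp.toLp 2 fun l => (if l = j then A l u - A l v else 0) + (N : ℝ)⁻¹ • (A l v - y l)

variable (A : ∀ i, X →L[ℝ] Y i) (y : PiLp 2 Y)

lemma sum_svrgDirection (hN : 0 < N) (u v : X) :
    ∑ j, svrgDirection A y j u v = stackOp A u - y := by
  have hN' : (N : ℝ) ≠ 0 := Nat.cast_ne_zero.2 hN.ne'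
  ext l
  simp only [svrgDirection, WithLp.ofLp_sum, Finset.sum_apply, Finset.sum_add_distrib,
    Finset.sum_ite_eq, Finset.mem_univ, if_true, Finset.sum_const, Finset.card_univ,
    Fintype.card_fin, ← Nat.cast_smul_eq_nsmul ℝ, smul_smul, mul_inv_cancel₀ hN', one_smul,
    PiLp.sub_apply, stackOp_apply]
  abel

lemma sum_norm_sq_svrgDirection_le (hN : 0 < N) (u v : X) :
    ∑ j, ‖svrgDirection A y j u v‖ ^ 2 ≤
      2 * ‖stackOp A u - y‖ ^ 2 + 2 * ‖stackOp A v - y‖ ^ 2 := by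
  have : Nonempty (Fin N) := ⟨⟨0, hN⟩⟩
  rw [norm_sq_stackOp_sub, norm_sq_stackOp_sub, Finset.mul_sum, Finset.mul_sum,
    ← Finset.sum_add_distrib]
  calc ∑ j, ‖svrgDirection A y j u v‖ ^ 2
      = ∑ l, ∑ j, ‖(if l = j then (A l u - y l) - (A l v - y l) else 0) +
          (Fintype.card (Fin N) : ℝ)⁻¹ • (A l v - y l)‖ ^ 2 := by
        simp only [fun j => PiLp.norm_sq_eq_of_L2 Y (svrgDirection A y j u v)]
        rw [Finset.sum_comm]
        simp [svrgDirection]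
    _ ≤ _ := Finset.sum_le_sum fun l _ => sum_norm_sq_ite_add_smul_le l _ _

end StackedOperator

/-- The index pairs `(n', k')` sampled strictly before inner step `k` of outer iteration `n`,
when every outer iteration runs `m` inner steps. -/
def pastIndices (m n k : ℕ) : Finset (ℕ × ℕ) :=
  Finset.range n ×ˢ Finset.range m ∪ {n} ×ˢ Finset.range k

lemma pastIndices_succ (m n k : ℕ) :
    pastIndices m n (k + 1) = insert (n, k) (pastIndices m n k) := by
  ext ⟨a, b⟩
  simp only [pastIndices, Finset.mem_union, Finset.mem_product, Finset.mem_range,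
    Finset.mem_singleton, Finset.mem_insert, Prod.mk.injEq]
  omega

lemma pastIndices_self (m n : ℕ) : pastIndices m n m = pastIndices m (n + 1) 0 := by
  ext ⟨a, b⟩
  simp only [pastIndices, Finset.mem_union, Finset.mem_product, Finset.mem_range,
    Finset.mem_singleton]
  omega

lemma notMem_pastIndices (m n k : ℕ) : (n, k) ∉ pastIndices m n k := by
  simp [pastIndices]

lemma pastIndices_mono {m n k k' : ℕ} (h : k ≤ k') : pastIndices m n k ⊆ pastIndices m n k' :=
  Finset.union_subset_union_right (Finset.product_subset_product_right (Finset.range_mono h))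

theorem isFunctionOf_pastIndices_of_doubleLoop {Ω α β : Type*} {I : ℕ × ℕ → Ω → α} {m : ℕ}
    {lam : ℕ → Ω → β} {lamk : ℕ → ℕ → Ω → β} (c : β) (F₀ : β → β) (F₁ : α → β → β → β)
    (h0 : ∀ ω, lam 0 ω = c) (hk0 : ∀ n ω, lamk n 0 ω = F₀ (lam n ω))
    (hkk : ∀ n k ω, k < m → lamk n (k + 1) ω = F₁ (I (n, k) ω) (lamk n k ω) (lam n ω))
    (hn : ∀ n ω, lam (n + 1) ω = lamk n m ω) (n : ℕ) :
    IsFunctionOf I (pastIndices m n 0) (lam n) ∧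
      ∀ k ≤ m, IsFunctionOf I (pastIndices m n k) (lamk n k) := by
  have inner : ∀ n, IsFunctionOf I (pastIndices m n 0) (lam n) →
      ∀ k ≤ m, IsFunctionOf I (pastIndices m n k) (lamk n k) := by
    intro n hlam k
    induction k with
    | zero => exact fun _ => (hlam.comp F₀).congr (hk0 n)
    | succ k ih =>
      intro hk
      have hsub : pastIndices m n k ⊆ pastIndices m n (k + 1) :=
        pastIndices_mono k.le_succ
      have hsample : IsFunctionOf I (pastIndices m n (k + 1)) (I (n, k)) :=
        IsFunctionOf.apply (by rw [pastIndices_succ]; exact Finset.mem_insert_self _ _)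
      exact ((hsample.prodMk ((ih (k.le_succ.trans hk)).mono hsub)).prodMk
        (hlam.mono (pastIndices_mono (Nat.zero_le _)))).comp (fun p => F₁ p.1.1 p.1.2 p.2)
        |>.congr fun ω => hkk n k ω hk
  have outer : ∀ n, IsFunctionOf I (pastIndices m n 0) (lam n) := by
    intro n
    induction n with
    | zero => exact (IsFunctionOf.const _ c).congr h0
    | succ n ih => exact pastIndices_self m n ▸ (inner n ih m le_rfl).congr (hn n)
  exact ⟨outer n, inner n (outer n)⟩

lemma integral_norm_sub_smul_sub_sq {Ω E : Type*} [MeasurableSpace Ω] {P : Measure Ω}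
    [NormedAddCommGroup E] [InnerProductSpace ℝ E] {f g : Ω → E} (w : E) (γ : ℝ)
    (hf : Integrable (fun ω => ‖f ω - w‖ ^ 2) P) (hfg : Integrable (fun ω => ⟪f ω - w, g ω⟫) P)
    (hg : Integrable (fun ω => ‖g ω‖ ^ 2) P) :
    ∫ ω, ‖f ω - γ • g ω - w‖ ^ 2 ∂P =
      ∫ ω, ‖f ω - w‖ ^ 2 ∂P - 2 * γ * ∫ ω, ⟪f ω - w, g ω⟫ ∂P + γ ^ 2 * ∫ ω, ‖g ω‖ ^ 2 ∂P := by
  simp_rw [norm_sub_smul_sub_sq]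
  rw [integral_add ?_ (hg.const_mul _), integral_sub hf (hfg.const_mul _), integral_const_mul,
    integral_const_mul]
  exact hf.sub (hfg.const_mul _)

section SVRGStep

variable {Ω ι : Type*} [MeasurableSpace Ω] {P : Measure Ω} [IsProbabilityMeasure P]
  {N : ℕ} {X : Type*} [NormedAddCommGroup X] [InnerProductSpace ℝ X] [CompleteSpace X]
  {Y : Fin N → Type*} [∀ i, NormedAddCommGroup (Y i)] [∀ i, InnerProductSpace ℝ (Y i)]
  [∀ i, CompleteSpace (Y i)] {A : ∀ i, X →L[ℝ] Y i} {I : ι → Ω → Fin N} {s : Finset ι}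
  {x₀ xdag : X} {y lamdag : PiLp 2 Y} {lam : Ω → PiLp 2 Y} {u v : Ω → X}

theorem integral_norm_sq_svrg_full_step (hI : ∀ i, Measurable (I i)) (hsol : stackOp A xdag = y)
    (hsource : xdag - x₀ = (ContinuousLinearMap.adjoint (stackOp A)) lamdag)
    (hlam : IsFunctionOf I s lam)
    (hu : ∀ ω, u ω = x₀ + (ContinuousLinearMap.adjoint (stackOp A)) (lam ω)) (γ : ℝ) :
    ∫ ω, ‖lam ω - γ • (stackOp A (u ω) - y) - lamdag‖ ^ 2 ∂P =
      ∫ ω, ‖lam ω - lamdag‖ ^ 2 ∂P - 2 * γ * ∫ ω, ‖u ω - xdag‖ ^ 2 ∂P +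
        γ ^ 2 * ∫ ω, ‖stackOp A (u ω) - y‖ ^ 2 ∂P := by
  have hu' : IsFunctionOf I s u :=
    (hlam.comp fun l => x₀ + (ContinuousLinearMap.adjoint (stackOp A)) l).congr hu
  rw [integral_norm_sub_smul_sub_sq lamdag γ
    ((hlam.comp fun l => ‖l - lamdag‖ ^ 2).integrable hI)
    (((hlam.prodMk hu').comp fun p => ⟪p.1 - lamdag, stackOp A p.2 - y⟫).integrable hI)
    ((hu'.comp fun x => ‖stackOp A x - y‖ ^ 2).integrable hI)]
  simp_rw [inner_sub_apply_sub_eq_norm_sq _ hsol hsource (hu _)]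

theorem integral_norm_sq_svrg_inner_step_le (hN : 0 < N) (hI : ∀ i, Measurable (I i))
    (hindep : iIndepFun I P) {i : ι} (hi : i ∉ s) (hunif : ∀ j, P {ω | I i ω = j} = 1 / N)
    (hsol : stackOp A xdag = y)
    (hsource : xdag - x₀ = (ContinuousLinearMap.adjoint (stackOp A)) lamdag)
    (hlam : IsFunctionOf I s lam) (hv : IsFunctionOf I s v)
    (hu : ∀ ω, u ω = x₀ + (ContinuousLinearMap.adjoint (stackOp A)) (lam ω)) (γ : ℝ) :
    ∫ ω, ‖lam ω - γ • svrgDirection A y (I i ω) (u ω) (v ω) - lamdag‖ ^ 2 ∂P ≤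
      ∫ ω, ‖lam ω - lamdag‖ ^ 2 ∂P - 2 * γ / N * ∫ ω, ‖u ω - xdag‖ ^ 2 ∂P +
        2 * γ ^ 2 / N *
          (∫ ω, ‖stackOp A (u ω) - y‖ ^ 2 ∂P + ∫ ω, ‖stackOp A (v ω) - y‖ ^ 2 ∂P) := by
  have hu' : IsFunctionOf I s u :=
    (hlam.comp fun l => x₀ + (ContinuousLinearMap.adjoint (stackOp A)) l).congr hu
  have hZ := (hlam.prodMk hu').prodMk hv
  have hiZ : IsFunctionOf I (s.cons i hi) fun ω => (I i ω, ((lam ω, u ω), v ω)) :=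
    (IsFunctionOf.apply (s.mem_cons_self i)).prodMk (hZ.mono (s.subset_cons hi))
  have hinner : ∫ ω, ⟪lam ω - lamdag, svrgDirection A y (I i ω) (u ω) (v ω)⟫ ∂P =
      (N : ℝ)⁻¹ * ∫ ω, ‖u ω - xdag‖ ^ 2 ∂P := by
    refine (hZ.integral_comp_uniform hI hindep hi hunif
      fun j z => ⟪z.1.1 - lamdag, svrgDirection A y j z.1.2 z.2⟫).trans ?_
    simp only [← inner_sum, sum_svrgDirection A y hN,
      inner_sub_apply_sub_eq_norm_sq _ hsol hsource (hu _)]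
  have hnorm : ∫ ω, ‖svrgDirection A y (I i ω) (u ω) (v ω)‖ ^ 2 ∂P ≤
      (N : ℝ)⁻¹ * (2 * ∫ ω, ‖stackOp A (u ω) - y‖ ^ 2 ∂P +
        2 * ∫ ω, ‖stackOp A (v ω) - y‖ ^ 2 ∂P) := by
    have hsplit : ∫ ω, 2 * ‖stackOp A (u ω) - y‖ ^ 2 + 2 * ‖stackOp A (v ω) - y‖ ^ 2 ∂P =
        2 * ∫ ω, ‖stackOp A (u ω) - y‖ ^ 2 ∂P + 2 * ∫ ω, ‖stackOp A (v ω) - y‖ ^ 2 ∂P := by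
      rw [integral_add ((hu'.comp fun x => 2 * ‖stackOp A x - y‖ ^ 2).integrable hI)
        ((hv.comp fun x => 2 * ‖stackOp A x - y‖ ^ 2).integrable hI), integral_const_mul,
        integral_const_mul]
    refine (hZ.integral_comp_uniform hI hindep hi hunif
      fun j z => ‖svrgDirection A y j z.1.2 z.2‖ ^ 2).trans_le ?_
    rw [← hsplit]
    exact mul_le_mul_of_nonneg_left (integral_mono
      ((hZ.comp fun z => ∑ j, ‖svrgDirection A y j z.1.2 z.2‖ ^ 2).integrable hI)
      ((hZ.comp fun z =>
        2 * ‖stackOp A z.1.2 - y‖ ^ 2 + 2 * ‖stackOp A z.2 - y‖ ^ 2).integrable hI)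
      fun ω => sum_norm_sq_svrgDirection_le A y hN (u ω) (v ω)) (by positivity)
  rw [integral_norm_sub_smul_sub_sq lamdag γ
    ((hlam.comp fun l => ‖l - lamdag‖ ^ 2).integrable hI)
    ((hiZ.comp fun z => ⟪z.2.1.1 - lamdag, svrgDirection A y z.1 z.2.1.2 z.2.2⟫).integrable hI)
    ((hiZ.comp fun z => ‖svrgDirection A y z.1 z.2.1.2 z.2.2‖ ^ 2).integrable hI), hinner]
  linear_combination mul_le_mul_of_nonneg_left hnorm (sq_nonneg γ)

end SVRGStep

lemma le_add_sum_range_of_succ_le_add {a b : ℕ → ℝ} {m : ℕ}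
    (h : ∀ k < m, a (k + 1) ≤ a k + b k) : a m ≤ a 0 + ∑ k ∈ Finset.range m, b k := by
  induction m with
  | zero => simp
  | succ m ih =>
    rw [Finset.sum_range_succ]
    linarith [ih fun k hk => h k (hk.trans m.lt_succ_self), h m m.lt_succ_self]

theorem svrg_dual_descent_inequality_general
    {Ω : Type*} [MeasurableSpace Ω] (P : Measure Ω) [IsProbabilityMeasure P]
    {X : Type*} [NormedAddCommGroup X] [InnerProductSpace ℝ X] [CompleteSpace X]
    {N : ℕ} (hN : 0 < N) {Y : Fin N → Type*}
    [∀ i, NormedAddCommGroup (Y i)] [∀ i, InnerProductSpace ℝ (Y i)]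
    [∀ i, CompleteSpace (Y i)]
    (A : ∀ i, X →L[ℝ] Y i) (L : ℝ)
    (m : ℕ) (γ₀ γ₁ : ℝ)
    (I : ℕ → ℕ → Ω → Fin N) (hImeas : ∀ n k, Measurable (I n k))
    (hunif : ∀ n k j, P {ω | I n k ω = j} = 1 / N)
    (hindep : iIndepFun
      (fun (p : ℕ × ℕ) ω => I p.1 p.2 ω) P)
    -- exact data, solution and the source condition
    (x₀ : X) (y : PiLp 2 Y) (xdag : X) (hsol : stackOp A xdag = y)
    (lamdag : PiLp 2 Y)
    (hsource : xdag - x₀ = (ContinuousLinearMap.adjoint (stackOp A)) lamdag)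
    -- the dual SVRG sequences and the induced primal iterates
    (lam : ℕ → Ω → PiLp 2 Y) (lamk : ℕ → ℕ → Ω → PiLp 2 Y)
    (μ : ℕ → ℕ → Ω → PiLp 2 Y) (x : ℕ → Ω → X) (xk : ℕ → ℕ → Ω → X)
    (hlam0 : ∀ ω, lam 0 ω = 0)
    (hxdef : ∀ n ω, x n ω = x₀ + (ContinuousLinearMap.adjoint (stackOp A)) (lam n ω))
    (hxkdef : ∀ n k ω, xk n k ω = x₀ + (ContinuousLinearMap.adjoint (stackOp A)) (lamk n k ω))
    (hlamk0 : ∀ n ω, lamk n 0 ω = lam n ω - γ₀ • (stackOp A (x n ω) - y))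
    (hμ : ∀ n k ω j, μ n k ω j =
      (if j = I n k ω then A j (xk n k ω) - A j (x n ω) else 0) +
        ((N : ℝ)⁻¹) • (A j (x n ω) - y j))
    (hlamkk : ∀ n k ω, k < m → lamk n (k + 1) ω = lamk n k ω - γ₁ • μ n k ω)
    (hlamn : ∀ n ω, lam (n + 1) ω = lamk n m ω) :
    ∀ n : ℕ,
      (∫ ω, ‖lam (n + 1) ω - lamdag‖ ^ 2 ∂P) - ∫ ω, ‖lam n ω - lamdag‖ ^ 2 ∂P ≤
        -2 * γ₀ * ∫ ω, ‖x n ω - xdag‖ ^ 2 ∂P -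
          (2 * γ₁ / (N : ℝ)) *
            ∑ k ∈ Finset.range m, ∫ ω, ‖xk n k ω - xdag‖ ^ 2 ∂P +
          (2 * γ₁ ^ 2 / (N : ℝ)) *
            ∑ k ∈ Finset.range m, ∫ ω, ‖stackOp A (xk n k ω) - y‖ ^ 2 ∂P +
          (γ₀ ^ 2 + 2 * (m : ℝ) * γ₁ ^ 2 / (N : ℝ)) *
            ∫ ω, ‖stackOp A (x n ω) - y‖ ^ 2 ∂P := by
  intro n
  set T := ContinuousLinearMap.adjoint (stackOp A)
  have hI : ∀ p : ℕ × ℕ, Measurable fun ω => I p.1 p.2 ω := fun p => hImeas p.1 p.2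
  have hμ' : ∀ n k ω, μ n k ω = svrgDirection A y (I n k ω) (xk n k ω) (x n ω) :=
    fun n k ω => by ext j; exact hμ n k ω j
  obtain ⟨hlam, hlamk⟩ := isFunctionOf_pastIndices_of_doubleLoop (I := fun p ω => I p.1 p.2 ω)
    0 (fun l => l - γ₀ • (stackOp A (x₀ + T l) - y))
    (fun j l l' => l - γ₁ • svrgDirection A y j (x₀ + T l) (x₀ + T l')) hlam0
    (fun n ω => by rw [hlamk0, hxdef])
    (fun n k ω hk => by rw [hlamkk n k ω hk, hμ', hxkdef, hxdef]) hlamn n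
  have hx : IsFunctionOf _ (pastIndices m n 0) (x n) := (hlam.comp (x₀ + T ·)).congr (hxdef n)
  have hfull := integral_norm_sq_svrg_full_step (P := P) hI hsol hsource hlam (hxdef n) γ₀
  simp_rw [← hlamk0 n] at hfull
  have hinner : ∀ k < m, ∫ ω, ‖lamk n (k + 1) ω - lamdag‖ ^ 2 ∂P ≤
      ∫ ω, ‖lamk n k ω - lamdag‖ ^ 2 ∂P + (-(2 * γ₁ / N) * ∫ ω, ‖xk n k ω - xdag‖ ^ 2 ∂P +
        2 * γ₁ ^ 2 / N * ∫ ω, ‖stackOp A (xk n k ω) - y‖ ^ 2 ∂P +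
        2 * γ₁ ^ 2 / N * ∫ ω, ‖stackOp A (x n ω) - y‖ ^ 2 ∂P) := by
    intro k hk
    have := integral_norm_sq_svrg_inner_step_le hN hI hindep (notMem_pastIndices m n k)
      (hunif n k) hsol hsource (hlamk k hk.le) (hx.mono (pastIndices_mono k.zero_le))
      (hxkdef n k) γ₁
    simp_rw [← hμ', ← hlamkk n k _ hk] at this
    linarith
  have htel := le_add_sum_range_of_succ_le_add
    (a := fun k => ∫ ω, ‖lamk n k ω - lamdag‖ ^ 2 ∂P) hinner
  simp only [Finset.sum_add_distrib, ← Finset.mul_sum, Finset.sum_const, Finset.card_range,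
    nsmul_eq_mul] at htel
  simp_rw [hlamn n]
  linear_combination htel + hfull

/-- the dual SVRG descent inequality under the benchmark source
condition `x† - x₀ = A* λ†`. -/
theorem svrg_dual_descent_inequality
    {Ω : Type*} [MeasurableSpace Ω] (P : Measure Ω) [IsProbabilityMeasure P]
    {X : Type*} [NormedAddCommGroup X] [InnerProductSpace ℝ X] [CompleteSpace X]
    {N : ℕ} (hN : 0 < N) {Y : Fin N → Type*}
    [∀ i, NormedAddCommGroup (Y i)] [∀ i, InnerProductSpace ℝ (Y i)]
    [∀ i, CompleteSpace (Y i)]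
    (A : ∀ i, X →L[ℝ] Y i) (L : ℝ)
    (hL : IsGreatest (Set.range fun i => ‖A i‖) L)
    (m : ℕ) (hm : 0 < m) (γ₀ γ₁ : ℝ) (hγ₀ : 0 < γ₀) (hγ₁ : 0 < γ₁)
    (I : ℕ → ℕ → Ω → Fin N) (hImeas : ∀ n k, Measurable (I n k))
    (hunif : ∀ n k j, P {ω | I n k ω = j} = 1 / N)
    (hindep : iIndepFun
      (fun (p : ℕ × ℕ) ω => I p.1 p.2 ω) P)
    -- exact data, solution and the source condition
    (x₀ : X) (y : PiLp 2 Y) (xdag : X) (hsol : stackOp A xdag = y)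
    (lamdag : PiLp 2 Y)
    (hsource : xdag - x₀ = (ContinuousLinearMap.adjoint (stackOp A)) lamdag)
    -- the dual SVRG sequences and the induced primal iterates
    (lam : ℕ → Ω → PiLp 2 Y) (lamk : ℕ → ℕ → Ω → PiLp 2 Y)
    (μ : ℕ → ℕ → Ω → PiLp 2 Y) (x : ℕ → Ω → X) (xk : ℕ → ℕ → Ω → X)
    (hlam0 : ∀ ω, lam 0 ω = 0)
    (hxdef : ∀ n ω, x n ω = x₀ + (ContinuousLinearMap.adjoint (stackOp A)) (lam n ω))
    (hxkdef : ∀ n k ω, xk n k ω = x₀ + (ContinuousLinearMap.adjoint (stackOp A)) (lamk n k ω))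
    (hlamk0 : ∀ n ω, lamk n 0 ω = lam n ω - γ₀ • (stackOp A (x n ω) - y))
    (hμ : ∀ n k ω j, μ n k ω j =
      (if j = I n k ω then A j (xk n k ω) - A j (x n ω) else 0) +
        ((N : ℝ)⁻¹) • (A j (x n ω) - y j))
    (hlamkk : ∀ n k ω, k < m → lamk n (k + 1) ω = lamk n k ω - γ₁ • μ n k ω)
    (hlamn : ∀ n ω, lam (n + 1) ω = lamk n m ω) :
    ∀ n : ℕ,
      (∫ ω, ‖lam (n + 1) ω - lamdag‖ ^ 2 ∂P) - ∫ ω, ‖lam n ω - lamdag‖ ^ 2 ∂P ≤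
        -2 * γ₀ * ∫ ω, ‖x n ω - xdag‖ ^ 2 ∂P -
          (2 * γ₁ / (N : ℝ)) *
            ∑ k ∈ Finset.range m, ∫ ω, ‖xk n k ω - xdag‖ ^ 2 ∂P +
          (2 * γ₁ ^ 2 / (N : ℝ)) *
            ∑ k ∈ Finset.range m, ∫ ω, ‖stackOp A (xk n k ω) - y‖ ^ 2 ∂P +
          (γ₀ ^ 2 + 2 * (m : ℝ) * γ₁ ^ 2 / (N : ℝ)) *
            ∫ ω, ‖stackOp A (x n ω) - y‖ ^ 2 ∂P :=
  svrg_dual_descent_inequality_general P hN A L m γ₀ γ₁ I hImeas hunif hindep x₀ y xdag hsol lamdag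
    hsource lam lamk μ x xk hlam0 hxdef hxkdef hlamk0 hμ hlamkk hlamn
end
end

section
/- If i ∈ {1,…,N} is chosen uniformly at random and μ ∈ Y = Y₁×⋯×Y_N is defined by μ_j = (1/N)·r_j for j ≠ i and μ_i = s_i + (1/N)·r_i, where r = A z - y and s_i = A_i w - A_i z' for fixed vectors, then E[‖μ‖²] ≤ (2/N)‖A x_n - y‖² + (2/N)‖A x_{n,k} - y‖² in the setting r = A x_n - y, s_{i} = A_i(x_{n,k} - x_n). -/
/-!
Write `r = A x_n - y`, `q = A x_{n,k} - y` and `t = 1/N`. Away from the sampled coordinate `i`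
the direction equals `t • r`, and at `i` it equals `q_i - (1 - t) r_i`. Hence
`‖μ‖² = t²‖r‖² - t²‖r_i‖² + ‖q_i - (1 - t) r_i‖²`, and averaging over `i` together with
`‖a - b‖² ≤ 2‖a‖² + 2‖b‖²` gives `E‖μ‖² ≤ 2t‖q‖² + t(1 - t)(2 - t)‖r‖² ≤ 2t‖q‖² + 2t‖r‖²`.
-/

open MeasureTheory ProbabilityTheory Filter

noncomputable section

theorem integral_comp_eq_sum_measureReal {Ω ι E : Type*} [MeasurableSpace Ω] [Fintype ι]
    [MeasurableSpace ι] [MeasurableSingletonClass ι] [NormedAddCommGroup E] [NormedSpace ℝ E]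
    [CompleteSpace E] (P : Measure Ω) [IsFiniteMeasure P] {i : Ω → ι} (hi : Measurable i)
    (f : ι → E) :
    ∫ ω, f (i ω) ∂P = ∑ j, P.real {ω | i ω = j} • f j := by
  rw [← integral_map hi.aemeasurable .of_discrete, integral_fintype (.of_finite (f := f))]
  simp only [Measure.real, Measure.map_apply hi (measurableSet_singleton _)]
  rfl

theorem PiLp.norm_sq_sub_norm_apply_sq_eq {ι : Type*} [Fintype ι] [DecidableEq ι]
    {E : ι → Type*} [∀ j, SeminormedAddCommGroup (E j)] {x v : PiLp 2 E} {k : ι}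
    (h : ∀ j ≠ k, x j = v j) :
    ‖x‖ ^ 2 - ‖x k‖ ^ 2 = ‖v‖ ^ 2 - ‖v k‖ ^ 2 := by
  simp only [PiLp.norm_sq_eq_of_L2, ← Finset.add_sum_erase _ _ (Finset.mem_univ k),
    add_sub_cancel_left]
  exact Finset.sum_congr rfl fun j hj => by rw [h j (Finset.ne_of_mem_erase hj)]

theorem norm_sub_sq_le_two_mul {E : Type*} [SeminormedAddCommGroup E] (a b : E) :
    ‖a - b‖ ^ 2 ≤ 2 * (‖a‖ ^ 2 + ‖b‖ ^ 2) :=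
  (pow_le_pow_left₀ (norm_nonneg _) (norm_sub_le a b) 2).trans add_sq_le

theorem integral_norm_sq_le_of_uniform_index {Ω ι : Type*} {E : ι → Type*} [MeasurableSpace Ω]
    [Fintype ι] [DecidableEq ι] [MeasurableSpace ι] [MeasurableSingletonClass ι]
    [∀ j, NormedAddCommGroup (E j)] [∀ j, NormedSpace ℝ (E j)]
    (P : Measure Ω) [IsFiniteMeasure P] {i : Ω → ι} (hi : Measurable i)
    (hunif : ∀ j, P {ω | i ω = j} = 1 / Fintype.card ι) (q r : PiLp 2 E) {μ : Ω → PiLp 2 E}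
    (hμ : ∀ ω j, μ ω j =
      (if j = i ω then q j - r j else 0) + ((Fintype.card ι : ℝ)⁻¹) • r j) :
    ∫ ω, ‖μ ω‖ ^ 2 ∂P ≤
      (2 / (Fintype.card ι : ℝ)) * ‖r‖ ^ 2 + (2 / (Fintype.card ι : ℝ)) * ‖q‖ ^ 2 := by
  set n : ℝ := (Fintype.card ι : ℝ)
  set t : ℝ := n⁻¹
  have ht₀ : 0 ≤ t := by positivity
  -- `n * t = 1` fails for an empty index type, where `t = 0⁻¹ = 0`
  have hnt : n * t ≤ 1 := mul_inv_le_one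
  have ht₁ : t ≤ 1 := Nat.cast_inv_le_one _
  set F : ι → ℝ := fun k => t ^ 2 * ‖r‖ ^ 2 - t ^ 2 * ‖r k‖ ^ 2 + ‖q k - (1 - t) • r k‖ ^ 2
  have hμ_eq : ∀ ω, ‖μ ω‖ ^ 2 = F (i ω) := by
    intro ω
    have hoff : ∀ j ≠ i ω, μ ω j = (t • r) j := fun j hj => by
      rw [hμ, if_neg hj, zero_add, PiLp.smul_apply]
    have hon : μ ω (i ω) = q (i ω) - (1 - t) • r (i ω) := by
      rw [hμ, if_pos rfl]; module
    have hsplit := PiLp.norm_sq_sub_norm_apply_sq_eq hoff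
    rw [hon, norm_smul, PiLp.smul_apply, norm_smul, Real.norm_of_nonneg ht₀] at hsplit
    linear_combination hsplit
  have hsum : ∑ k, ‖q k - (1 - t) • r k‖ ^ 2 ≤ 2 * ‖q‖ ^ 2 + 2 * (1 - t) ^ 2 * ‖r‖ ^ 2 := by
    calc ∑ k, ‖q k - (1 - t) • r k‖ ^ 2
        ≤ ∑ k, 2 * (‖q k‖ ^ 2 + (1 - t) ^ 2 * ‖r k‖ ^ 2) := Finset.sum_le_sum fun k _ => by
          simpa [norm_smul, mul_pow] using norm_sub_sq_le_two_mul (q k) ((1 - t) • r k)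
      _ = 2 * ‖q‖ ^ 2 + 2 * (1 - t) ^ 2 * ‖r‖ ^ 2 := by
          simp only [PiLp.norm_sq_eq_of_L2, Finset.mul_sum, Finset.sum_add_distrib, mul_add,
            mul_assoc]
  calc ∫ ω, ‖μ ω‖ ^ 2 ∂P
      = t * ∑ k, F k := by
        simp_rw [hμ_eq]
        rw [integral_comp_eq_sum_measureReal P hi F, Finset.mul_sum]
        simp [Measure.real, hunif, t, n]
    _ ≤ _ := by
        simp only [F, Finset.sum_add_distrib, Finset.sum_sub_distrib, ← Finset.mul_sum,
          Finset.sum_const, Finset.card_univ, nsmul_eq_mul, ← PiLp.norm_sq_eq_of_L2]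
        have hcube : n * t ^ 3 * ‖r‖ ^ 2 ≤ t ^ 2 * ‖r‖ ^ 2 := by
          nlinarith [mul_le_mul_of_nonneg_right hnt (by positivity : 0 ≤ t ^ 2 * ‖r‖ ^ 2)]
        have hq := mul_le_mul_of_nonneg_left hsum ht₀
        rw [div_eq_mul_inv]
        nlinarith [mul_nonneg (mul_nonneg ht₀ ht₀) (sq_nonneg ‖r‖)]

theorem svrg_dual_direction_second_moment_bound_general
    {Ω : Type*} [MeasurableSpace Ω] (P : Measure Ω) [IsProbabilityMeasure P]
    {X : Type*} [NormedAddCommGroup X] [InnerProductSpace ℝ X]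
    {N : ℕ} {Y : Fin N → Type*}
    [∀ i, NormedAddCommGroup (Y i)] [∀ i, InnerProductSpace ℝ (Y i)]
    (A : ∀ i, X →L[ℝ] Y i)
    -- the uniformly distributed random index
    (i : Ω → Fin N) (himeas : Measurable i)
    (hunif : ∀ j, P {ω | i ω = j} = 1 / N)
    -- exact data and fixed points
    (y : PiLp 2 Y) (xn xnk : X)
    -- the dual SVRG direction
    (μ : Ω → PiLp 2 Y)
    (hμ : ∀ ω j, μ ω j =
      (if j = i ω then A j xnk - A j xn else 0) + ((N : ℝ)⁻¹) • (A j xn - y j)) :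
    ∫ ω, ‖μ ω‖ ^ 2 ∂P ≤
      (2 / (N : ℝ)) * ‖stackOp A xn - y‖ ^ 2 +
        (2 / (N : ℝ)) * ‖stackOp A xnk - y‖ ^ 2 := by
  have hunif' : ∀ j, P {ω | i ω = j} = 1 / Fintype.card (Fin N) := by simpa using hunif
  have hμ' : ∀ ω j, μ ω j =
      (if j = i ω then (stackOp A xnk - y) j - (stackOp A xn - y) j else 0) +
        ((Fintype.card (Fin N) : ℝ)⁻¹) • (stackOp A xn - y) j := fun ω j => by
    simpa [stackOp] using hμ ω j
  simpa using integral_norm_sq_le_of_uniform_index P himeas hunif' _ _ hμ'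

/-- second-moment bound for the dual SVRG direction `μ`. -/
theorem svrg_dual_direction_second_moment_bound
    {Ω : Type*} [MeasurableSpace Ω] (P : Measure Ω) [IsProbabilityMeasure P]
    {X : Type*} [NormedAddCommGroup X] [InnerProductSpace ℝ X] [CompleteSpace X]
    {N : ℕ} (hN : 0 < N) {Y : Fin N → Type*}
    [∀ i, NormedAddCommGroup (Y i)] [∀ i, InnerProductSpace ℝ (Y i)]
    [∀ i, CompleteSpace (Y i)]
    (A : ∀ i, X →L[ℝ] Y i)
    -- the uniformly distributed random index
    (i : Ω → Fin N) (himeas : Measurable i)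
    (hunif : ∀ j, P {ω | i ω = j} = 1 / N)
    -- exact data and fixed points
    (y : PiLp 2 Y) (xdag : X) (hsol : stackOp A xdag = y) (xn xnk : X)
    -- the dual SVRG direction
    (μ : Ω → PiLp 2 Y)
    (hμ : ∀ ω j, μ ω j =
      (if j = i ω then A j xnk - A j xn else 0) + ((N : ℝ)⁻¹) • (A j xn - y j)) :
    ∫ ω, ‖μ ω‖ ^ 2 ∂P ≤
      (2 / (N : ℝ)) * ‖stackOp A xn - y‖ ^ 2 +
        (2 / (N : ℝ)) * ‖stackOp A xnk - y‖ ^ 2 :=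
  svrg_dual_direction_second_moment_bound_general P A i himeas hunif y xn xnk μ hμ
end
end
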